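/- Let $M, N \geq 2$ be integers, let $K$ be a compact subset of $\mathbb{R}_{>0}$, and let $a \in \mathbb{R}_{>0}^M$, $b \in \mathbb{R}_{>0}^N$ be fixed vectors with strictly positive entries. Define $f_{ij} = x_i y_j - a_i b_j$ for $x \in K^M$, $y \in K^N$. Then there exists a constant $D > 0$ such that for all $x \in K^M$ and $y \in K^N$, $\sum_{i=2}^{M} f_{i1}^2 + \sum_{j=2}^{N} f_{1j}^2 + f_{11}^2 \;\leq\; \sum_{i=1}^{M} \sum_{j=1}^{N} f_{ij}^2 \;\leq\; D \Big( \sum_{i=2}^{M} f_{i1}^2 + \sum_{j=2}^{N} f_{1j}^2 + f_{11}^2 \Big).$ -/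
import Mathlib

open Finset

lemma four_sq (p q r s : ℝ) : (p + q + r - s) ^ 2 ≤ 4 * (p ^ 2 + q ^ 2 + r ^ 2 + s ^ 2) := by
  nlinarith [sq_nonneg (p - q), sq_nonneg (p - r), sq_nonneg (p + s), sq_nonneg (q - r),
    sq_nonneg (q + s), sq_nonneg (r + s)]

lemma pointwise_core (ε C x0y0 fij fi0 f0j f00 c1 c2 c3 : ℝ)
    (hε : 0 < ε) (hx : ε * ε ≤ x0y0)
    (hid : fij * x0y0 = fi0 * f0j + c1 * fi0 + c2 * f0j - c3 * f00)
    (hf0j : f0j ^ 2 ≤ C ^ 2) (hc1 : c1 ^ 2 ≤ C ^ 2) (hc2 : c2 ^ 2 ≤ C ^ 2)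
    (hc3 : c3 ^ 2 ≤ C ^ 2) :
    fij ^ 2 ≤ (8 * C ^ 2 / ε ^ 4) * (fi0 ^ 2 + f0j ^ 2 + f00 ^ 2) := by
  have hnum : (fij * x0y0) ^ 2 ≤ 8 * C ^ 2 * (fi0 ^ 2 + f0j ^ 2 + f00 ^ 2) := by
    rw [hid]
    have h4 := four_sq (fi0 * f0j) (c1 * fi0) (c2 * f0j) (c3 * f00)
    have e1 : (fi0 * f0j) ^ 2 ≤ C ^ 2 * fi0 ^ 2 := by
      have := mul_le_mul_of_nonneg_left hf0j (sq_nonneg fi0); nlinarith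
    have e2 : (c1 * fi0) ^ 2 ≤ C ^ 2 * fi0 ^ 2 := by
      have := mul_le_mul_of_nonneg_right hc1 (sq_nonneg fi0); nlinarith
    have e3 : (c2 * f0j) ^ 2 ≤ C ^ 2 * f0j ^ 2 := by
      have := mul_le_mul_of_nonneg_right hc2 (sq_nonneg f0j); nlinarith
    have e4 : (c3 * f00) ^ 2 ≤ C ^ 2 * f00 ^ 2 := by
      have := mul_le_mul_of_nonneg_right hc3 (sq_nonneg f00); nlinarith
    nlinarith [sq_nonneg f0j, sq_nonneg fi0, sq_nonneg f00]
  have hε4 : (0:ℝ) < ε ^ 4 := by positivity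
  have hmon : fij ^ 2 * ε ^ 4 ≤ (fij * x0y0) ^ 2 := by
    have h2 : (ε * ε) ^ 2 ≤ x0y0 ^ 2 := by nlinarith
    calc fij ^ 2 * ε ^ 4 = fij ^ 2 * (ε * ε) ^ 2 := by ring
    _ ≤ fij ^ 2 * x0y0 ^ 2 := mul_le_mul_of_nonneg_left h2 (sq_nonneg fij)
    _ = (fij * x0y0) ^ 2 := by ring
  rw [div_mul_eq_mul_div, le_div_iff₀ hε4]
  linarith

lemma pointwise_bound (ε R AB x0 y0 xi yj a0 b0 ai bj : ℝ)
    (hε : 0 < ε)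
    (hx0 : ε ≤ x0) (hx0R : x0 ≤ R)
    (hy0 : ε ≤ y0) (hy0R : y0 ≤ R)
    (hxi : 0 ≤ xi) (hxiR : xi ≤ R)
    (hyj : 0 ≤ yj) (hyjR : yj ≤ R)
    (ha0 : 0 ≤ a0) (hb0 : 0 ≤ b0) (hai : 0 ≤ ai) (hbj : 0 ≤ bj)
    (h1 : a0 * bj ≤ AB) (h2 : ai * b0 ≤ AB) (h3 : ai * bj ≤ AB)
    (hAB : 0 ≤ AB) :
    (xi * yj - ai * bj) ^ 2 ≤ (8 * (R * R + AB) ^ 2 / ε ^ 4) *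
      ((xi * y0 - ai * b0) ^ 2 + (x0 * yj - a0 * bj) ^ 2
        + (x0 * y0 - a0 * b0) ^ 2) := by
  have hR : 0 ≤ R := le_trans (le_trans hε.le hx0) hx0R
  have hR2 : 0 ≤ R * R := by positivity
  have hCpos : 0 ≤ R * R + AB := by linarith
  apply pointwise_core ε (R * R + AB) (x0 * y0) _ _ _ _ (a0 * bj) (ai * b0) (ai * bj) hε
  · exact mul_le_mul hx0 hy0 hε.le (hε.trans_le hx0).le
  · ring
  · have h0 : 0 ≤ x0 * yj := mul_nonneg (hε.trans_le hx0).le hyj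
    have hlow : -(R * R + AB) ≤ x0 * yj - a0 * bj := by linarith
    have hhigh : x0 * yj - a0 * bj ≤ R * R + AB := by
      have : x0 * yj ≤ R * R := mul_le_mul hx0R hyjR hyj hR
      have h0' : 0 ≤ a0 * bj := by positivity
      linarith
    exact sq_le_sq' hlow hhigh
  · exact pow_le_pow_left₀ (by positivity) (by linarith) 2
  · exact pow_le_pow_left₀ (by positivity) (by linarith) 2
  · exact pow_le_pow_left₀ (by positivity) (by linarith) 2

lemma main_aux (M N : ℕ) (K : Set ℝ) (hK : IsCompact K) (hKpos : K ⊆ {t : ℝ | 0 < t})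
    (a : Fin M → ℝ) (b : Fin N → ℝ) (ha : ∀ i, 0 < a i) (hb : ∀ j, 0 < b j)
    (i0 : Fin M) (j0 : Fin N) :
    ∃ D > (0 : ℝ), ∀ x : Fin M → ℝ, ∀ y : Fin N → ℝ,
      (∀ i, x i ∈ K) → (∀ j, y j ∈ K) →
      ((∑ i ∈ Finset.univ.erase i0, (x i * y j0 - a i * b j0) ^ 2)
          + (∑ j ∈ Finset.univ.erase j0, (x i0 * y j - a i0 * b j) ^ 2)
          + (x i0 * y j0 - a i0 * b j0) ^ 2
        ≤ ∑ i : Fin M, ∑ j : Fin N, (x i * y j - a i * b j) ^ 2) ∧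
      (∑ i : Fin M, ∑ j : Fin N, (x i * y j - a i * b j) ^ 2
        ≤ D * ((∑ i ∈ Finset.univ.erase i0, (x i * y j0 - a i * b j0) ^ 2)
            + (∑ j ∈ Finset.univ.erase j0, (x i0 * y j - a i0 * b j) ^ 2)
            + (x i0 * y j0 - a i0 * b j0) ^ 2)) := by
  rcases K.eq_empty_or_nonempty with hKe | hne
  · exact ⟨1, one_pos, fun x y hx _ => absurd (hx i0) (by simp [hKe])⟩
  obtain ⟨ε, hεK, hεmin⟩ := hK.exists_isMinOn hne continuousOn_id
  obtain ⟨R, hRK, hRmax⟩ := hK.exists_isMaxOn hne continuousOn_id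
  have hε : 0 < ε := hKpos hεK
  have hmin : ∀ t ∈ K, ε ≤ t := fun t ht => isMinOn_iff.mp hεmin t ht
  have hmax : ∀ t ∈ K, t ≤ R := fun t ht => isMaxOn_iff.mp hRmax t ht
  set A := ∑ i, a i with hAdef
  set B := ∑ j, b j with hBdef
  have haA : ∀ i, a i ≤ A := fun i =>
    Finset.single_le_sum (fun i _ => (ha i).le) (mem_univ i)
  have hbB : ∀ j, b j ≤ B := fun j =>
    Finset.single_le_sum (fun j _ => (hb j).le) (mem_univ j)
  have hA : 0 ≤ A := le_trans (ha i0).le (haA i0)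
  have hB : 0 ≤ B := le_trans (hb j0).le (hbB j0)
  have hab : ∀ i j, a i * b j ≤ A * B := fun i j =>
    mul_le_mul (haA i) (hbB j) (hb j).le hA
  set E := 8 * (R * R + A * B) ^ 2 / ε ^ 4 with hE
  have hEnn : 0 ≤ E := by positivity
  refine ⟨3 * E * (M * N) + 1, by positivity, fun x y hx hy => ?_⟩
  set S1 := ∑ i ∈ Finset.univ.erase i0, (x i * y j0 - a i * b j0) ^ 2 with hS1def
  set S2 := ∑ j ∈ Finset.univ.erase j0, (x i0 * y j - a i0 * b j) ^ 2 with hS2def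
  set F := (x i0 * y j0 - a i0 * b j0) ^ 2 with hFdef
  have hS1 : 0 ≤ S1 := sum_nonneg fun _ _ => sq_nonneg _
  have hS2 : 0 ≤ S2 := sum_nonneg fun _ _ => sq_nonneg _
  have hF : 0 ≤ F := sq_nonneg _
  have hrow : ∑ i, (x i * y j0 - a i * b j0) ^ 2 = F + S1 :=
    (Finset.add_sum_erase _ _ (mem_univ i0)).symm
  have hcol : ∑ j, (x i0 * y j - a i0 * b j) ^ 2 = F + S2 :=
    (Finset.add_sum_erase _ _ (mem_univ j0)).symm
  constructor
  · have hsplit : ∑ i : Fin M, ∑ j : Fin N, (x i * y j - a i * b j) ^ 2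
        = ∑ i, ((x i * y j0 - a i * b j0) ^ 2
            + ∑ j ∈ Finset.univ.erase j0, (x i * y j - a i * b j) ^ 2) :=
      Finset.sum_congr rfl fun i _ => (Finset.add_sum_erase _ _ (mem_univ j0)).symm
    rw [hsplit, Finset.sum_add_distrib, hrow]
    have h2 : S2 ≤ ∑ i, ∑ j ∈ Finset.univ.erase j0, (x i * y j - a i * b j) ^ 2 := by
      rw [hS2def]
      exact Finset.single_le_sum
        (f := fun i => ∑ j ∈ Finset.univ.erase j0, (x i * y j - a i * b j) ^ 2)
        (fun i _ => sum_nonneg fun _ _ => sq_nonneg _) (mem_univ i0)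
    linarith
  · have hpt : ∀ i j, (x i * y j - a i * b j) ^ 2
        ≤ E * ((x i * y j0 - a i * b j0) ^ 2 + (x i0 * y j - a i0 * b j) ^ 2 + F) :=
      fun i j =>
        pointwise_bound ε R (A * B) (x i0) (y j0) (x i) (y j) (a i0) (b j0) (a i) (b j)
          hε (hmin _ (hx i0)) (hmax _ (hx i0)) (hmin _ (hy j0)) (hmax _ (hy j0))
          (hKpos (hx i)).le (hmax _ (hx i)) (hKpos (hy j)).le (hmax _ (hy j))
          (ha i0).le (hb j0).le (ha i).le (hb j).le
          (hab i0 j) (hab i j0) (hab i j) (mul_nonneg hA hB)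
  -- each row/column square is bounded by the full row/column sum
    have hrowterm : ∀ i, (x i * y j0 - a i * b j0) ^ 2 ≤ F + S1 := by
      intro i
      rw [← hrow]
      exact Finset.single_le_sum (f := fun i => (x i * y j0 - a i * b j0) ^ 2)
        (fun i _ => sq_nonneg _) (mem_univ i)
    have hcolterm : ∀ j, (x i0 * y j - a i0 * b j) ^ 2 ≤ F + S2 := by
      intro j
      rw [← hcol]
      exact Finset.single_le_sum (f := fun j => (x i0 * y j - a i0 * b j) ^ 2)
        (fun j _ => sq_nonneg _) (mem_univ j)
    have hpt2 : ∀ i j, (x i * y j - a i * b j) ^ 2 ≤ E * (3 * (S1 + S2 + F)) := by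
      intro i j
      refine le_trans (hpt i j) (mul_le_mul_of_nonneg_left ?_ hEnn)
      have := hrowterm i
      have := hcolterm j
      linarith
    calc ∑ i : Fin M, ∑ j : Fin N, (x i * y j - a i * b j) ^ 2
        ≤ ∑ _i : Fin M, ∑ _j : Fin N, E * (3 * (S1 + S2 + F)) :=
          Finset.sum_le_sum fun i _ => Finset.sum_le_sum fun j _ => hpt2 i j
      _ = (M * N : ℝ) * (E * (3 * (S1 + S2 + F))) := by
          simp [Finset.sum_const, Finset.card_univ]; ring
      _ ≤ (3 * E * (M * N) + 1) * (S1 + S2 + F) := by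
          have hMN : (0:ℝ) ≤ (M * N : ℝ) := by positivity
          nlinarith

/-- The full sum of squared rank-one factorization residuals is equivalent,
uniformly over a compact subset `K` of the positive reals, to the sum of the
squared residuals in the first row and first column.
(Index `0` plays the role of index `1` in the paper.) -/
theorem residual_sum_equivalence (M N : ℕ) (hM : 2 ≤ M) (hN : 2 ≤ N)
    (K : Set ℝ) (hK : IsCompact K) (hKpos : K ⊆ {t : ℝ | 0 < t})
    (a : Fin M → ℝ) (b : Fin N → ℝ) (ha : ∀ i, 0 < a i) (hb : ∀ j, 0 < b j) :
    ∃ D > (0 : ℝ), ∀ x : Fin M → ℝ, ∀ y : Fin N → ℝ,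
      (∀ i, x i ∈ K) → (∀ j, y j ∈ K) →
      ((∑ i ∈ Finset.univ.erase (⟨0, by omega⟩ : Fin M),
            (x i * y ⟨0, by omega⟩ - a i * b ⟨0, by omega⟩) ^ 2)
          + (∑ j ∈ Finset.univ.erase (⟨0, by omega⟩ : Fin N),
              (x ⟨0, by omega⟩ * y j - a ⟨0, by omega⟩ * b j) ^ 2)
          + (x ⟨0, by omega⟩ * y ⟨0, by omega⟩
              - a ⟨0, by omega⟩ * b ⟨0, by omega⟩) ^ 2
        ≤ ∑ i : Fin M, ∑ j : Fin N, (x i * y j - a i * b j) ^ 2) ∧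
      (∑ i : Fin M, ∑ j : Fin N, (x i * y j - a i * b j) ^ 2
        ≤ D * ((∑ i ∈ Finset.univ.erase (⟨0, by omega⟩ : Fin M),
                  (x i * y ⟨0, by omega⟩ - a i * b ⟨0, by omega⟩) ^ 2)
            + (∑ j ∈ Finset.univ.erase (⟨0, by omega⟩ : Fin N),
                  (x ⟨0, by omega⟩ * y j - a ⟨0, by omega⟩ * b j) ^ 2)
            + (x ⟨0, by omega⟩ * y ⟨0, by omega⟩
                - a ⟨0, by omega⟩ * b ⟨0, by omega⟩) ^ 2)) :=
  main_aux M N K hK hKpos a b ha hb ⟨0, by omega⟩ ⟨0, by omega⟩
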